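/- arXiv:1310.4375 — 2 statements merged into one kernel-verified Lean document; each statement's English description precedes it below -/
import Mathlib

section
/- If (u,v) ∈ ℝ_+^n × ℝ_+^m are positive vectors such that diag(u) K diag(v) ∈ U(a,b) where K = exp(-λM) entrywise with λ > 0, then T* = diag(u) K diag(v) is the unique minimizer of the regularized transport problem min_{T ∈ U(a,b)} ⟨T,M⟩ - (1/λ) h(T), where h(T) = -Σ_{ij} t_{ij} log t_{ij}. -/
/-!
With `S = diag(u) K diag(v)` one has `log S i j = log u i - λ M i j + log v j`, so on `U(a,b)`
the cross term `∑ T i j log S i j` equals `-λ ⟨T, M⟩` up to a constant fixed by the marginals.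
Hence `λ (⟨T,M⟩ - h(T)/λ) = KL(T ‖ S) + const`, and Gibbs' inequality `KL(T ‖ S) > 0` for
`T ≠ S` of equal total mass gives the claim.
-/

open Finset

/-- Transportation polytope `U(a,b)`. -/
def transportPolytope {n m : ℕ} (a : Fin n → ℝ) (b : Fin m → ℝ) :
    Set (Matrix (Fin n) (Fin m) ℝ) :=
  {T | (∀ i j, 0 ≤ T i j) ∧ (∀ i, ∑ j, T i j = a i) ∧ (∀ j, ∑ i, T i j = b j)}

/-- Frobenius inner product. -/
def frob {n m : ℕ} (T M : Matrix (Fin n) (Fin m) ℝ) : ℝ :=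
  ∑ i, ∑ j, T i j * M i j

/-- Optimal transport cost `p(a,b,M)`. -/
noncomputable def otCost {n m : ℕ} (a : Fin n → ℝ) (b : Fin m → ℝ)
    (M : Matrix (Fin n) (Fin m) ℝ) : ℝ :=
  sInf ((fun T => frob T M) '' transportPolytope a b)

/-- Entropy of a matrix, with the convention `0 * log 0 = 0`. -/
noncomputable def matEntropy {n m : ℕ} (T : Matrix (Fin n) (Fin m) ℝ) : ℝ :=
  ∑ i, ∑ j, Real.negMulLog (T i j)

open Real InformationTheory

lemma mul_klFun_div_eq {t s : ℝ} (hs : 0 < s) :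
    s * klFun (t / s) = t * log t - t * log s + s - t := by
  rcases eq_or_ne t 0 with rfl | ht
  · simp [klFun_apply]
  · rw [klFun_apply, log_div ht hs.ne']
    field_simp

lemma sum_mul_log_lt_sum_mul_log {ι : Type*} [Fintype ι] {t s : ι → ℝ}
    (ht : ∀ i, 0 ≤ t i) (hs : ∀ i, 0 < s i) (hsum : ∑ i, t i = ∑ i, s i) (hne : t ≠ s) :
    ∑ i, t i * log (s i) < ∑ i, t i * log (t i) := by
  obtain ⟨i₀, hi₀⟩ : ∃ i, t i ≠ s i := Function.ne_iff.mp hne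
  have hratio : ∀ i, 0 ≤ t i / s i := fun i => div_nonneg (ht i) (hs i).le
  have hkl : 0 < ∑ i, s i * klFun (t i / s i) := by
    refine sum_pos' (fun i _ => mul_nonneg (hs i).le (klFun_nonneg (hratio i)))
      ⟨i₀, mem_univ _, mul_pos (hs i₀) ?_⟩
    refine (klFun_nonneg (hratio i₀)).lt_of_ne' fun h => hi₀ ?_
    exact (div_eq_one_iff_eq (hs i₀).ne').mp ((klFun_eq_zero_iff (hratio i₀)).mp h)
  simp only [mul_klFun_div_eq (hs _), sum_add_distrib, sum_sub_distrib] at hkl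
  linarith

section SinkhornForm

variable {n m : ℕ} {a : Fin n → ℝ} {b : Fin m → ℝ} {P : Matrix (Fin n) (Fin m) ℝ}
  {u : Fin n → ℝ} {v : Fin m → ℝ}

lemma sum_sum_mul_log_sinkhornForm (hP : P ∈ transportPolytope a b) (hu : ∀ i, 0 < u i)
    (hv : ∀ j, 0 < v j) (lam : ℝ) (M : Matrix (Fin n) (Fin m) ℝ) :
    ∑ i, ∑ j, P i j * log (u i * exp (-lam * M i j) * v j)
      = ∑ i, a i * log (u i) - lam * frob P M + ∑ j, b j * log (v j) := by
  obtain ⟨-, hrow, hcol⟩ := hP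
  have hlog : ∀ i j, log (u i * exp (-lam * M i j) * v j)
      = log (u i) - lam * M i j + log (v j) := fun i j => by
    rw [log_mul (mul_pos (hu i) (exp_pos _)).ne' (hv j).ne', log_mul (hu i).ne' (exp_pos _).ne',
      log_exp]
    ring
  have hu_term : ∑ i, ∑ j, P i j * log (u i) = ∑ i, a i * log (u i) := by
    simp only [← sum_mul, hrow]
  have hv_term : ∑ i, ∑ j, P i j * log (v j) = ∑ j, b j * log (v j) := by
    rw [sum_comm]
    simp only [← sum_mul, hcol]
  have hM_term : ∑ i, ∑ j, P i j * (lam * M i j) = lam * frob P M := by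
    simp only [frob, mul_sum, mul_left_comm]
  simp only [hlog, mul_add, mul_sub, sum_add_distrib, sum_sub_distrib, hu_term, hv_term,
    hM_term]

lemma matEntropy_eq_neg_sum_sum_mul_log (P : Matrix (Fin n) (Fin m) ℝ) :
    matEntropy P = -∑ i, ∑ j, P i j * log (P i j) := by
  simp only [matEntropy, negMulLog, neg_mul, sum_neg_distrib]

lemma regularizedCost_eq_of_sinkhornForm (hP : P ∈ transportPolytope a b)
    (hu : ∀ i, 0 < u i) (hv : ∀ j, 0 < v j) {lam : ℝ} (hlam : lam ≠ 0)
    (M : Matrix (Fin n) (Fin m) ℝ) :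
    frob P M - (1 / lam) * matEntropy P
      = (1 / lam) * (∑ i, ∑ j, P i j * log (P i j)
          - ∑ i, ∑ j, P i j * log (u i * exp (-lam * M i j) * v j)
          + ∑ i, a i * log (u i) + ∑ j, b j * log (v j)) := by
  rw [sum_sum_mul_log_sinkhornForm hP hu hv, matEntropy_eq_neg_sum_sum_mul_log]
  field_simp
  ring

lemma sum_sum_eq_sum_of_mem_transportPolytope (hP : P ∈ transportPolytope a b) :
    ∑ i, ∑ j, P i j = ∑ i, a i :=
  sum_congr rfl fun i _ => hP.2.1 i

lemma sum_sum_mul_log_lt_of_mem_transportPolytope {T S : Matrix (Fin n) (Fin m) ℝ}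
    (hT : T ∈ transportPolytope a b) (hS : S ∈ transportPolytope a b) (hSpos : ∀ i j, 0 < S i j)
    (hne : T ≠ S) :
    ∑ i, ∑ j, T i j * log (S i j) < ∑ i, ∑ j, T i j * log (T i j) := by
  have hmass : ∑ p : Fin n × Fin m, T p.1 p.2 = ∑ p : Fin n × Fin m, S p.1 p.2 := by
    simp only [Fintype.sum_prod_type]
    rw [sum_sum_eq_sum_of_mem_transportPolytope hT, sum_sum_eq_sum_of_mem_transportPolytope hS]
  have h := sum_mul_log_lt_sum_mul_log (fun p => hT.1 p.1 p.2) (fun p => hSpos p.1 p.2) hmass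
    fun h => hne (funext₂ fun i j => congrFun h (i, j))
  simpa only [Fintype.sum_prod_type] using h

end SinkhornForm

theorem sinkhorn_form_unique_minimizer_general {n m : ℕ} (lam : ℝ) (hlam : 0 < lam)
    (a : Fin n → ℝ) (b : Fin m → ℝ)
    (M : Matrix (Fin n) (Fin m) ℝ) (u : Fin n → ℝ) (v : Fin m → ℝ)
    (hu : ∀ i, 0 < u i) (hv : ∀ j, 0 < v j)
    (hfeas : (fun i j => u i * Real.exp (-lam * M i j) * v j) ∈ transportPolytope a b) :
    ∀ T ∈ transportPolytope a b,
      T ≠ (fun i j => u i * Real.exp (-lam * M i j) * v j) →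
      frob (fun i j => u i * Real.exp (-lam * M i j) * v j) M
          - (1 / lam) * matEntropy (fun i j => u i * Real.exp (-lam * M i j) * v j)
        < frob T M - (1 / lam) * matEntropy T := by
  intro T hT hne
  set S : Matrix (Fin n) (Fin m) ℝ := fun i j => u i * exp (-lam * M i j) * v j
  have hSpos : ∀ i j, 0 < S i j := fun i j => mul_pos (mul_pos (hu i) (exp_pos _)) (hv j)
  have hgibbs := sum_sum_mul_log_lt_of_mem_transportPolytope hT hfeas hSpos hne
  rw [regularizedCost_eq_of_sinkhornForm hfeas hu hv hlam.ne',
    regularizedCost_eq_of_sinkhornForm hT hu hv hlam.ne', sub_self]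
  gcongr
  linarith

theorem sinkhorn_form_unique_minimizer {n m : ℕ} (lam : ℝ) (hlam : 0 < lam)
    (a : Fin n → ℝ) (b : Fin m → ℝ)
    (ha : a ∈ stdSimplex ℝ (Fin n)) (hb : b ∈ stdSimplex ℝ (Fin m))
    (hapos : ∀ i, 0 < a i) (hbpos : ∀ j, 0 < b j)
    (M : Matrix (Fin n) (Fin m) ℝ) (u : Fin n → ℝ) (v : Fin m → ℝ)
    (hu : ∀ i, 0 < u i) (hv : ∀ j, 0 < v j)
    (hfeas : (fun i j => u i * Real.exp (-lam * M i j) * v j) ∈ transportPolytope a b) :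
    ∀ T ∈ transportPolytope a b,
      T ≠ (fun i j => u i * Real.exp (-lam * M i j) * v j) →
      frob (fun i j => u i * Real.exp (-lam * M i j) * v j) M
          - (1 / lam) * matEntropy (fun i j => u i * Real.exp (-lam * M i j) * v j)
        < frob T M - (1 / lam) * matEntropy T :=
  sinkhorn_form_unique_minimizer_general lam hlam a b M u v hu hv hfeas
end

section
/- Closest measure on a fixed support to a single target: given Y = (y_1,…,y_m) with weights b ∈ Σ_m, and a fixed support X = (x_1,…,x_n), the minimum over a ∈ Σ_n of p(a,b,M_{XY}) equals Σ_j b_j · min_i D(x_i,y_j)^p, attained by transporting all mass b_j to a nearest point of X. -/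
/-!
Every plan `T ∈ U(a,b)` splits column `j` into masses `T i j` summing to `b j`, each paying at
least `min_i M i j`; so `∑ j, b j * min_i M i j` bounds every `p(a,b,M)` from below. Sending all of
`b j` to a minimising row gives a plan attaining the bound, and its row sums are a probability
vector `a`, which is therefore optimal.
-/

open Finset

section TransportPolytope

variable {n m : ℕ} {a : Fin n → ℝ} {b : Fin m → ℝ}

theorem mem_stdSimplex_of_mem_transportPolytope {T : Matrix (Fin n) (Fin m) ℝ}
    (hT : T ∈ transportPolytope a b) (hb : b ∈ stdSimplex ℝ (Fin m)) :
    a ∈ stdSimplex ℝ (Fin n) := by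
  obtain ⟨hnonneg, hrow, hcol⟩ := hT
  refine ⟨fun i => hrow i ▸ sum_nonneg fun j _ => hnonneg i j, ?_⟩
  calc ∑ i, a i = ∑ j, ∑ i, T i j := by simp_rw [← hrow]; exact sum_comm
    _ = 1 := by simp_rw [hcol]; exact hb.2

theorem vecMulVec_mem_transportPolytope (ha : a ∈ stdSimplex ℝ (Fin n))
    (hb : b ∈ stdSimplex ℝ (Fin m)) : Matrix.vecMulVec a b ∈ transportPolytope a b := by
  refine ⟨fun i j => mul_nonneg (ha.1 i) (hb.1 j), fun i => ?_, fun j => ?_⟩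
  · simp only [Matrix.vecMulVec_apply, ← mul_sum, hb.2, mul_one]
  · simp only [Matrix.vecMulVec_apply, ← sum_mul, ha.2, one_mul]

theorem sum_mul_iInf_le_frob {T : Matrix (Fin n) (Fin m) ℝ} (hT : T ∈ transportPolytope a b)
    (M : Matrix (Fin n) (Fin m) ℝ) : ∑ j, b j * ⨅ i, M i j ≤ frob T M := by
  obtain ⟨hnonneg, -, hcol⟩ := hT
  calc ∑ j, b j * ⨅ i, M i j = ∑ j, ∑ i, T i j * ⨅ i', M i' j := by
        simp_rw [← sum_mul, hcol]
    _ ≤ ∑ j, ∑ i, T i j * M i j := by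
        gcongr with j _ i _
        · exact hnonneg i j
        · exact ciInf_le (Finite.bddBelow_range _) i
    _ = frob T M := sum_comm

theorem sum_mul_iInf_le_otCost (hU : (transportPolytope a b).Nonempty)
    (M : Matrix (Fin n) (Fin m) ℝ) : ∑ j, b j * ⨅ i, M i j ≤ otCost a b M :=
  le_csInf (hU.image _) fun _ ⟨_, hT, hc⟩ => hc ▸ sum_mul_iInf_le_frob hT M

theorem otCost_eq_sum_mul_iInf {T : Matrix (Fin n) (Fin m) ℝ} (hT : T ∈ transportPolytope a b)
    {M : Matrix (Fin n) (Fin m) ℝ} (hTM : frob T M = ∑ j, b j * ⨅ i, M i j) :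
    otCost a b M = ∑ j, b j * ⨅ i, M i j :=
  IsLeast.csInf_eq ⟨⟨T, hT, hTM⟩, fun _ ⟨_, hT', hc⟩ => hc ▸ sum_mul_iInf_le_frob hT' M⟩

end TransportPolytope

section AssignmentPlan

variable {n m : ℕ}

def assignmentPlan (f : Fin m → Fin n) (b : Fin m → ℝ) : Matrix (Fin n) (Fin m) ℝ :=
  fun i j => if f j = i then b j else 0

theorem assignmentPlan_mem_transportPolytope (f : Fin m → Fin n) {b : Fin m → ℝ}
    (hb : ∀ j, 0 ≤ b j) :
    assignmentPlan f b ∈ transportPolytope (fun i => ∑ j, assignmentPlan f b i j) b := by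
  refine ⟨fun i j => ?_, fun i => rfl, fun j => by simp [assignmentPlan]⟩
  unfold assignmentPlan
  split_ifs
  exacts [hb j, le_rfl]

theorem frob_assignmentPlan (f : Fin m → Fin n) (b : Fin m → ℝ) (M : Matrix (Fin n) (Fin m) ℝ) :
    frob (assignmentPlan f b) M = ∑ j, b j * M (f j) j := by
  rw [frob, sum_comm]
  simp [assignmentPlan, ite_mul]

end AssignmentPlan

theorem isLeast_otCost_stdSimplex {n m : ℕ} [NeZero n] (M : Matrix (Fin n) (Fin m) ℝ)
    {b : Fin m → ℝ} (hb : b ∈ stdSimplex ℝ (Fin m)) :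
    IsLeast {c : ℝ | ∃ a ∈ stdSimplex ℝ (Fin n), c = otCost a b M} (∑ j, b j * ⨅ i, M i j) := by
  choose nearest hnearest using fun j => exists_eq_ciInf_of_finite (f := fun i => M i j)
  have hplan := assignmentPlan_mem_transportPolytope nearest hb.1
  refine ⟨⟨_, mem_stdSimplex_of_mem_transportPolytope hplan hb, ?_⟩, ?_⟩
  · exact (otCost_eq_sum_mul_iInf hplan (by simp only [frob_assignmentPlan, hnearest])).symm
  · rintro _ ⟨a, ha, rfl⟩
    exact sum_mul_iInf_le_otCost ⟨_, vecMulVec_mem_transportPolytope ha hb⟩ M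

theorem closest_measure_fixed_support_general {Ω : Type*} [MetricSpace Ω]
    {n m : ℕ} [NeZero n] (p : ℝ)
    (X : Fin n → Ω) (Y : Fin m → Ω) (b : Fin m → ℝ) (hb : b ∈ stdSimplex ℝ (Fin m)) :
    IsLeast {c : ℝ | ∃ a ∈ stdSimplex ℝ (Fin n),
        c = otCost a b (fun i j => dist (X i) (Y j) ^ p)}
      (∑ j, b j * ⨅ i : Fin n, dist (X i) (Y j) ^ p) :=
  isLeast_otCost_stdSimplex _ hb

theorem closest_measure_fixed_support {Ω : Type*} [MetricSpace Ω]
    {n m : ℕ} [NeZero n] (p : ℝ) (hp : 1 ≤ p)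
    (X : Fin n → Ω) (Y : Fin m → Ω) (b : Fin m → ℝ) (hb : b ∈ stdSimplex ℝ (Fin m)) :
    IsLeast {c : ℝ | ∃ a ∈ stdSimplex ℝ (Fin n),
        c = otCost a b (fun i j => dist (X i) (Y j) ^ p)}
      (∑ j, b j * ⨅ i : Fin n, dist (X i) (Y j) ^ p) :=
  closest_measure_fixed_support_general p X Y b hb
end
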